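/- Let A, B be n×n positive definite complex matrices and v ∈ [0,1]. Suppose 0 < m·I ≤ A⁻¹, B⁻¹ ≤ M·I for scalars 0 < m ≤ M, and let K(h) = (h+1)²/(4h) with h = M/m. Then the weighted geometric mean satisfies A ♯_v B ≤ K(h) · (A !_v B), where A !_v B = ((1−v)A⁻¹ + vB⁻¹)⁻¹ is the weighted harmonic mean. (This is the α = 0 case of the main theorem with the identity map.) -/

import Mathlib

open Matrix
open scoped ComplexOrder

noncomputable section
namespace Paper

variable {n : ℕ}

/-- Real part `(A + Aᴴ)/2`. -/
def re (A : Matrix (Fin n) (Fin n) ℂ) : Matrix (Fin n) (Fin n) ℂ := (2⁻¹ : ℂ) • (A + Aᴴ)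

/-- Imaginary part `(A - Aᴴ)/(2i)`. -/
def im (A : Matrix (Fin n) (Fin n) ℂ) : Matrix (Fin n) (Fin n) ℂ :=
  (2 * Complex.I)⁻¹ • (A - Aᴴ)

/-- The sector `S_α`. -/
def sector (α : ℝ) : Set ℂ := {z | 0 < z.re ∧ |z.im| ≤ z.re * Real.tan α}

/-- Numerical range of a matrix. -/
def numericalRange (A : Matrix (Fin n) (Fin n) ℂ) : Set ℂ :=
  {z | ∃ x : Fin n → ℂ, star x ⬝ᵥ x = 1 ∧ z = star x ⬝ᵥ (A *ᵥ x)}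

/-- Loewner order: `X ≤ Y` iff `Y - X` is positive semidefinite. -/
def loewnerLE (X Y : Matrix (Fin n) (Fin n) ℂ) : Prop := (Y - X).PosSemidef

lemma re_isHermitian (A : Matrix (Fin n) (Fin n) ℂ) : (re A).IsHermitian := by
  show ((2⁻¹ : ℂ) • (A + Aᴴ))ᴴ = (2⁻¹ : ℂ) • (A + Aᴴ)
  rw [Matrix.conjTranspose_smul, Matrix.conjTranspose_add,
    Matrix.conjTranspose_conjTranspose, add_comm Aᴴ A]
  simp

/-- The `j`-th largest element of `v` (descending sort). -/
def nthLargest (v : Fin n → ℝ) (j : Fin n) : ℝ :=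
  ((List.ofFn v).mergeSort (fun a b => decide (b ≤ a))).get
    (Fin.cast (by simp) j)

/-- `j`-th largest eigenvalue of a Hermitian matrix. -/
def eigDesc {A : Matrix (Fin n) (Fin n) ℂ} (hA : A.IsHermitian) (j : Fin n) : ℝ :=
  nthLargest hA.eigenvalues j

/-- `j`-th largest singular value. -/
def singular (A : Matrix (Fin n) (Fin n) ℂ) (j : Fin n) : ℝ :=
  nthLargest (fun i => Real.sqrt ((Matrix.isHermitian_conjTranspose_mul_self A).eigenvalues i)) j

/-- Weighted geometric mean of positive definite matrices. -/
def sharp (v : ℝ) {A B : Matrix (Fin n) (Fin n) ℂ} (hA : A.PosDef) (hB : B.PosDef) :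
    Matrix (Fin n) (Fin n) ℂ :=
  hA.posSemidef.1.cfc Real.sqrt *
    (Matrix.isHermitian_mul_mul_conjTranspose (hA.posSemidef.1.cfc Real.sqrt)⁻¹ hB.1).cfc
      (fun x => Real.rpow x v) * hA.posSemidef.1.cfc Real.sqrt

/-- Weighted arithmetic mean. -/
def arith (v : ℝ) (A B : Matrix (Fin n) (Fin n) ℂ) : Matrix (Fin n) (Fin n) ℂ :=
  (1 - v) • A + v • B

/-- Weighted harmonic mean. -/
def harm (v : ℝ) (A B : Matrix (Fin n) (Fin n) ℂ) : Matrix (Fin n) (Fin n) ℂ :=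
  ((1 - v) • A⁻¹ + v • B⁻¹)⁻¹

/-- Kantorovich constant. -/
def K (h : ℝ) : ℝ := (h + 1) ^ 2 / (4 * h)

/-! Each step is a scalar inequality pushed through the functional calculus. Weighted AM–GM
`x ^ v ≤ (1 - v) + v x` gives `A ♯ᵥ B ≤ (1 - v) A + v B`. On `[m, M]` the function `1 / x` lies
below its chord `(M + m - x) / (M m)`; applied to `A⁻¹` and `B⁻¹`, this bounds the arithmetic mean
by the same affine function of `E = (1 - v) A⁻¹ + v B⁻¹ = (A !ᵥ B)⁻¹`. Finally that chord lies below
`K(M / m) / x` for every `x > 0`, since the difference is `(M + m - 2x)² / (4 M m x)`. -/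

open scoped MatrixOrder

lemma inv_le_secant {x m M : ℝ} (hm : 0 < m) (hmx : m ≤ x) (hxM : x ≤ M) :
    x⁻¹ ≤ (M * m)⁻¹ * (M + m - x) := by
  have hx : 0 < x := hm.trans_le hmx
  have hM : 0 < M := hx.trans_le hxM
  have key : (M * m)⁻¹ * (M + m - x) - x⁻¹ = (x - m) * (M - x) / (M * m * x) := by
    field_simp
    ring
  rw [← sub_nonneg, key]
  exact div_nonneg (mul_nonneg (sub_nonneg.2 hmx) (sub_nonneg.2 hxM)) (by positivity)

lemma secant_le_kantorovich_mul_inv {x m M : ℝ} (hx : 0 < x) (hm : 0 < m) (hM : 0 < M) :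
    (M * m)⁻¹ * (M + m - x) ≤ K (M / m) * x⁻¹ := by
  have key : K (M / m) * x⁻¹ - (M * m)⁻¹ * (M + m - x) =
      (M + m - 2 * x) ^ 2 / (4 * (M * m) * x) := by
    unfold K
    field_simp
    ring
  rw [← sub_nonneg, key]
  positivity

section OrderedCFC

variable {𝒜 : Type*} [TopologicalSpace 𝒜] [Ring 𝒜] [StarRing 𝒜] [PartialOrder 𝒜]
  [StarOrderedRing 𝒜] [Algebra ℝ 𝒜] [ContinuousFunctionalCalculus ℝ 𝒜 IsSelfAdjoint]
  [NonnegSpectrumClass ℝ 𝒜]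

lemma cfc_rpow_le_one_sub_smul_add_smul {a : 𝒜} (ha : 0 ≤ a) {v : ℝ} (hv0 : 0 ≤ v)
    (hv1 : v ≤ 1) : cfc (fun x : ℝ => x ^ v) a ≤ (1 - v) • (1 : 𝒜) + v • a := by
  calc cfc (fun x : ℝ => x ^ v) a ≤ cfc (fun x => (1 - v) * 1 + v * x) a := by
        refine cfc_mono fun x hx => ?_
        have hx0 : 0 ≤ x := spectrum_nonneg_of_nonneg ha hx
        have bernoulli := rpow_one_add_le_one_add_mul_self (s := x - 1) (by linarith) hv0 hv1
        rw [add_sub_cancel] at bernoulli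
        linarith
    _ = (1 - v) • (1 : 𝒜) + v • a := by
        rw [cfc_add .., cfc_const_mul .., cfc_const_mul .., cfc_const_one .., cfc_id' ..]

lemma isStrictlyPositive_of_algebraMap_le [StarModule ℝ 𝒜] {a : 𝒜} {m : ℝ} (hm : 0 < m)
    (hma : algebraMap ℝ 𝒜 m ≤ a) : IsStrictlyPositive a := by
  have ha : IsSelfAdjoint a := .of_ge hma (.algebraMap 𝒜 (.all m))
  exact (StarOrderedRing.isStrictlyPositive_iff_spectrum_pos a).2 fun x hx =>
    hm.trans_le ((algebraMap_le_iff_le_spectrum ha).1 hma x hx)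

lemma ringInverse_le_secant [StarModule ℝ 𝒜] {a : 𝒜} {m M : ℝ} (hm : 0 < m)
    (hma : algebraMap ℝ 𝒜 m ≤ a) (haM : a ≤ algebraMap ℝ 𝒜 M) :
    Ring.inverse a ≤ (M * m)⁻¹ • (algebraMap ℝ 𝒜 (M + m) - a) := by
  have ha := isStrictlyPositive_of_algebraMap_le hm hma
  have h0 : ∀ x ∈ spectrum ℝ a, x ≠ 0 := fun x hx => (ha.spectrum_pos hx).ne'
  calc Ring.inverse a = cfc (fun x : ℝ => x⁻¹) a :=
        (cfc_ringInverse_id (R := ℝ) a ha.isUnit).symm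
    _ ≤ cfc (fun x => (M * m)⁻¹ * (M + m - x)) a := by
        refine cfc_mono (fun x hx => ?_) (by fun_prop (disch := exact h0))
        exact inv_le_secant hm ((algebraMap_le_iff_le_spectrum ha.isSelfAdjoint).1 hma x hx)
          ((le_algebraMap_iff_spectrum_le ha.isSelfAdjoint).1 haM x hx)
    _ = (M * m)⁻¹ • (algebraMap ℝ 𝒜 (M + m) - a) := by
        rw [cfc_const_mul .., cfc_sub .., cfc_const .., cfc_id' ..]

lemma secant_le_kantorovich_smul_ringInverse {a : 𝒜} (ha : IsStrictlyPositive a) {m M : ℝ}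
    (hm : 0 < m) (hM : 0 < M) :
    (M * m)⁻¹ • (algebraMap ℝ 𝒜 (M + m) - a) ≤ K (M / m) • Ring.inverse a := by
  have h0 : ∀ x ∈ spectrum ℝ a, x ≠ 0 := fun x hx => (ha.spectrum_pos hx).ne'
  calc (M * m)⁻¹ • (algebraMap ℝ 𝒜 (M + m) - a)
        = cfc (fun x => (M * m)⁻¹ * (M + m - x)) a := by
        rw [cfc_const_mul .., cfc_sub .., cfc_const .., cfc_id' ..]
    _ ≤ cfc (fun x => K (M / m) * x⁻¹) a :=
        cfc_mono (fun x hx => secant_le_kantorovich_mul_inv (ha.spectrum_pos hx) hm hM)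
          (hg := by fun_prop (disch := exact h0))
    _ = K (M / m) • Ring.inverse a := by
        rw [← cfc_ringInverse_id (R := ℝ) a ha.isUnit,
          cfc_const_mul _ _ _ (by fun_prop (disch := exact h0))]

end OrderedCFC

lemma le_secant_inv {ι 𝕜 : Type*} [Fintype ι] [DecidableEq ι] [RCLike 𝕜] {C : Matrix ι ι 𝕜}
    (hC : IsUnit C) {m M : ℝ} (hm : 0 < m) (hmC : algebraMap ℝ _ m ≤ C⁻¹)
    (hCM : C⁻¹ ≤ algebraMap ℝ _ M) : C ≤ (M * m)⁻¹ • (algebraMap ℝ _ (M + m) - C⁻¹) := by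
  have h := ringInverse_le_secant hm hmC hCM
  rwa [← nonsing_inv_eq_ringInverse, nonsing_inv_nonsing_inv _ ((isUnit_iff_isUnit_det C).1 hC)]
    at h

lemma loewnerLE_iff_le {X Y : Matrix (Fin n) (Fin n) ℂ} : loewnerLE X Y ↔ X ≤ Y := Iff.rfl

lemma sharp_le_arith {A B : Matrix (Fin n) (Fin n) ℂ} (hA : A.PosDef) (hB : B.PosDef) {v : ℝ}
    (hv0 : 0 ≤ v) (hv1 : v ≤ 1) : sharp v hA hB ≤ arith v A B := by
  simp only [sharp, ← IsHermitian.cfc_eq]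
  set T := cfc Real.sqrt A
  have hTT : T * T = A := by
    rw [← cfc_mul .., cfc_congr (g := fun x => x) fun x hx =>
      Real.mul_self_sqrt (spectrum_nonneg_of_nonneg hA.posSemidef.nonneg hx), cfc_id' ..]
  have hT : IsSelfAdjoint T := cfc_predicate _ _
  have hTunit : IsUnit T := isUnit_of_mul_isUnit_left (hTT ▸ hA.isUnit)
  set X := T⁻¹ * B * (T⁻¹)ᴴ
  have hX : 0 ≤ X := (hB.posSemidef.mul_mul_conjTranspose_same _).nonneg
  have hTXT : T * X * T = B := by
    have hTdet : IsUnit T.det := (isUnit_iff_isUnit_det T).1 hTunit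
    simp only [X]
    rw [conjTranspose_nonsing_inv, ← star_eq_conjTranspose, hT.star_eq, ← mul_assoc, ← mul_assoc,
      mul_nonsing_inv _ hTdet, one_mul, mul_assoc, nonsing_inv_mul _ hTdet, mul_one]
  calc T * cfc (fun x => Real.rpow x v) X * T ≤ T * ((1 - v) • 1 + v • X) * T :=
        hT.conjugate_le_conjugate (cfc_rpow_le_one_sub_smul_add_smul hX hv0 hv1)
    _ = arith v A B := by
        rw [arith, mul_add, add_mul, mul_smul_comm, smul_mul_assoc, mul_one, hTT,
          mul_smul_comm, smul_mul_assoc, hTXT]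

/-- `A ♯ᵥ B ≤ K(h) (A !ᵥ B)`. -/
theorem sharp_le_kantorovich_smul_harm (A B : Matrix (Fin n) (Fin n) ℂ) (hA : A.PosDef) (hB : B.PosDef)
    (v : ℝ) (hv : v ∈ Set.Icc 0 1) (m M : ℝ) (hm : 0 < m) (hmM : m ≤ M)
    (hA1 : loewnerLE (m • (1 : Matrix (Fin n) (Fin n) ℂ)) A⁻¹) (hA2 : loewnerLE A⁻¹ (M • 1))
    (hB1 : loewnerLE (m • (1 : Matrix (Fin n) (Fin n) ℂ)) B⁻¹) (hB2 : loewnerLE B⁻¹ (M • 1)) :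
    loewnerLE (sharp v hA hB) (K (M / m) • harm v A B) := by
  obtain ⟨hv0, hv1⟩ := hv
  have hM : 0 < M := hm.trans_le hmM
  simp only [loewnerLE_iff_le, ← Algebra.algebraMap_eq_smul_one] at hA1 hA2 hB1 hB2 ⊢
  set S : Matrix (Fin n) (Fin n) ℂ → Matrix (Fin n) (Fin n) ℂ :=
    fun X => (M * m)⁻¹ • (algebraMap ℝ _ (M + m) - X)
  set E := (1 - v) • A⁻¹ + v • B⁻¹
  have hmE : algebraMap ℝ _ m ≤ E := by
    calc algebraMap ℝ _ m = (1 - v) • algebraMap ℝ _ m + v • algebraMap ℝ _ m := by module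
      _ ≤ E := add_le_add (smul_le_smul_of_nonneg_left hA1 (sub_nonneg.2 hv1))
        (smul_le_smul_of_nonneg_left hB1 hv0)
  calc sharp v hA hB ≤ arith v A B := sharp_le_arith hA hB hv0 hv1
    _ ≤ (1 - v) • S A⁻¹ + v • S B⁻¹ :=
        add_le_add
          (smul_le_smul_of_nonneg_left (le_secant_inv hA.isUnit hm hA1 hA2) (sub_nonneg.2 hv1))
          (smul_le_smul_of_nonneg_left (le_secant_inv hB.isUnit hm hB1 hB2) hv0)
    _ = S E := by simp only [S, E]; module
    _ ≤ K (M / m) • harm v A B := by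
        rw [harm, nonsing_inv_eq_ringInverse]
        exact secant_le_kantorovich_smul_ringInverse
          (isStrictlyPositive_of_algebraMap_le hm hmE) hm hM

end Paper
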